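/- Let T be a rooted caterpillar tree on n leaves (a rooted binary phylogenetic X-tree with exactly one cherry) whose positive edge lengths satisfy the ultrametric condition. Then for every k with 2 ≤ k ≤ n there is exactly one size-k minPD set of T, namely the set consisting of the k leaves whose pendant edges are shortest; and for k = 1 there are exactly n size-1 minPD sets (every singleton is a minPD set). -/

import Mathlib

/-!
Rooted phylogenetic `X`-trees with positive edge lengths.

A tree on a finite vertex type `V` is encoded by its parent function: the root
has no parent, every other vertex has one, and iterating the parent function
reaches the root.  The edge into a non-root vertex `v` has length `len v`, and
`hgt v` is the distance from the root to `v`.  Leaves are the vertices with no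
children; the taxon set `X` of the paper is the set `leaves` of leaves.
Every non-leaf, non-root vertex has out-degree (number of children) at least 2.
-/

noncomputable section

attribute [local instance] Classical.propDecidable

structure PhyloTree (V : Type) [Fintype V] [DecidableEq V] where
  root : V
  parent : V → Option V
  len : V → ℝ
  hgt : V → ℝ
  parent_root : parent root = none
  parent_isSome : ∀ v, v ≠ root → (parent v).isSome
  reaches_root : ∀ v, Relation.ReflTransGen (fun a b => parent a = some b) v root
  hgt_root : hgt root = 0
  hgt_eq : ∀ v u, parent v = some u → hgt v = hgt u + len v
  len_pos : ∀ v, v ≠ root → 0 < len v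
  outdeg_ge_two : ∀ v, v ≠ root → (∃ u, parent u = some v) →
    2 ≤ Set.ncard {u | parent u = some v}

namespace PhyloTree

variable {V : Type} [Fintype V] [DecidableEq V]

/-- `T.step a b` : `b` is the parent of `a`. -/
def step (T : PhyloTree V) (a b : V) : Prop := T.parent a = some b

/-- `T.anc u v` : `u` is an ancestor of `v`, i.e. `u` lies on the (unique) path
from the root to `v` (reflexively). -/
def anc (T : PhyloTree V) (u v : V) : Prop := Relation.ReflTransGen T.step v u

/-- a leaf is a vertex with no children. -/
def IsLeaf (T : PhyloTree V) (v : V) : Prop := ∀ u, T.parent u ≠ some v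

/-- the leaf set (the taxon set `X`). -/
def leaves (T : PhyloTree V) : Set V := {v | T.IsLeaf v}

/-- Phylogenetic diversity of a set `Y`: the total length of all edges `e`
whose set of descendant leaves meets `Y` (the edge into a non-root vertex `v`
has length `T.len v`). -/
def PD (T : PhyloTree V) (Y : Set V) : ℝ :=
  ∑ v : V, if v ≠ T.root ∧ ∃ x ∈ Y, T.IsLeaf x ∧ T.anc v x then T.len v else 0

/-- the ultrametric condition: all leaves are at the same distance from the root. -/
def Ultrametric (T : PhyloTree V) : Prop :=
  ∀ x y, T.IsLeaf x → T.IsLeaf y → T.hgt x = T.hgt y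

/-- `R d`: the set of vertices within distance `d` above some leaf. -/
def R (T : PhyloTree V) (d : ℝ) : Set V :=
  {v | ∃ x, T.IsLeaf x ∧ T.anc v x ∧ T.hgt x - T.hgt v ≤ d}

/-- adjacency in the forest induced by `T` on a vertex set `S`. -/
def adjIn (T : PhyloTree V) (S : Set V) (u v : V) : Prop :=
  u ∈ S ∧ v ∈ S ∧ (T.parent u = some v ∨ T.parent v = some u)

/-- the connected components of the forest induced by `T` on `S`. -/
def components (T : PhyloTree V) (S : Set V) : Set (Set V) :=
  {C | ∃ v ∈ S, C = S ∩ {u | Relation.ReflTransGen (T.adjIn S) v u}}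

/-- `c d`: the number of connected components of the forest `T[R(d)]`. -/
def ccount (T : PhyloTree V) (d : ℝ) : ℕ := (T.components (T.R d)).ncard

/-- `k` is a branching value if `T[R(d)]` has exactly `k` components for some `d ≥ 0`. -/
def IsBranchingValue (T : PhyloTree V) (k : ℕ) : Prop := ∃ d : ℝ, 0 ≤ d ∧ T.ccount d = k

/-- the branching distance `d_k = min {d : c(d) = k}`. -/
def branchDist (T : PhyloTree V) (k : ℕ) : ℝ := sInf {d | 0 ≤ d ∧ T.ccount d = k}

/-- `k⁻`: the largest branching value `≤ k`. -/
def kminus (T : PhyloTree V) (k : ℕ) : ℕ := sSup {j | j ≤ k ∧ T.IsBranchingValue j}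

/-- `k⁺`: the smallest branching value `≥ k`. -/
def kplus (T : PhyloTree V) (k : ℕ) : ℕ := sInf {j | k ≤ j ∧ T.IsBranchingValue j}

/-- `A` is a size-`k` maxPD set. -/
def IsMaxPD (T : PhyloTree V) (k : ℕ) (A : Set V) : Prop :=
  A ⊆ T.leaves ∧ A.ncard = k ∧ ∀ Y ⊆ T.leaves, Y.ncard = k → T.PD Y ≤ T.PD A

/-- `A` is a size-`k` minPD set. -/
def IsMinPD (T : PhyloTree V) (k : ℕ) (A : Set V) : Prop :=
  A ⊆ T.leaves ∧ A.ncard = k ∧ ∀ Y ⊆ T.leaves, Y.ncard = k → T.PD A ≤ T.PD Y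

/-- `m T k`: the number of size-`k` maxPD sets of `T`. -/
def m (T : PhyloTree V) (k : ℕ) : ℕ := {A : Set V | T.IsMaxPD k A}.ncard

/-- `T` is binary: every non-leaf vertex has exactly two children. -/
def Binary (T : PhyloTree V) : Prop :=
  ∀ v, ¬ T.IsLeaf v → Set.ncard {u | T.parent u = some v} = 2

end PhyloTree

namespace PhyloTree

variable {V : Type} [Fintype V] [DecidableEq V]

/-- a cherry: a two-element set of leaves with a common parent. -/
def IsCherry (T : PhyloTree V) (p : Set V) : Prop :=
  ∃ x y v, x ≠ y ∧ p = {x, y} ∧ T.IsLeaf x ∧ T.IsLeaf y ∧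
    T.parent x = some v ∧ T.parent y = some v

/-- a rooted caterpillar tree: a rooted binary phylogenetic tree with exactly
one cherry. -/
def IsCaterpillar (T : PhyloTree V) : Prop :=
  T.Binary ∧ ∃! p : Set V, T.IsCherry p

end PhyloTree

/-!
In an ultrametric caterpillar every internal vertex lies on the path from the root to the parent `m`
of the cherry `{c₁, c₂}`. With `h` the common root-to-leaf distance, this gives
`PD Y = h + ∑_{y ∈ Y \ {c₂}} len y` whenever `c₂ ∈ Y`, while `PD Y ≥ h + ∑_{Y \ {y}} len` for any
leaf `y ∈ Y` in any ultrametric tree. Two leaves with equal pendant length have parents at equal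
height on that path, so they share their parent and form the cherry: pendant lengths are pairwise
distinct apart from `len c₁ = len c₂`, which is the least. Hence `c₂` together with the `k - 1`
shortest pendant edges among the other leaves has strictly smaller PD than any other `k`-set of
leaves. For `k = 1`, `PD {x} = h` for every leaf `x`.
-/

namespace Finset

variable {α : Type*} [DecidableEq α]

theorem exists_subset_card_eq_forall_lt {β : Type*} [LinearOrder β] {s : Finset α} {f : α → β}
    (hf : Set.InjOn f s) {k : ℕ} (hk : k ≤ #s) :
    ∃ t ⊆ s, #t = k ∧ ∀ a ∈ t, ∀ b ∈ s \ t, f a < f b := by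
  induction k with
  | zero => exact ⟨∅, empty_subset s, card_empty, by simp⟩
  | succ k ih =>
    obtain ⟨t, hts, htk, hlt⟩ := ih (by omega)
    have hne : (s \ t).Nonempty := by
      rw [← card_pos, card_sdiff_of_subset hts]
      omega
    obtain ⟨a₀, ha₀, hmin⟩ := (s \ t).exists_min_image f hne
    rw [mem_sdiff] at ha₀
    refine ⟨insert a₀ t, insert_subset ha₀.1 hts, by rw [card_insert_of_notMem ha₀.2, htk], ?_⟩
    intro a ha b hb
    rw [mem_sdiff, mem_insert, not_or] at hb
    have hb' : b ∈ s \ t := mem_sdiff.2 ⟨hb.1, hb.2.2⟩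
    rcases mem_insert.1 ha with rfl | ha
    · exact (hmin b hb').lt_of_ne fun h => hb.2.1 (hf hb.1 ha₀.1 h.symm)
    · exact hlt a ha b hb'

theorem sum_lt_sum_of_card_eq_of_forall_lt {M : Type*} [AddCommMonoid M] [LinearOrder M]
    [IsOrderedCancelAddMonoid M] {s t : Finset α} {f : α → M} (hcard : #s = #t) (hne : s ≠ t)
    (hlt : ∀ a ∈ s, ∀ b ∈ t \ s, f a < f b) : ∑ a ∈ s, f a < ∑ b ∈ t, f b := by
  have hts : (t \ s).Nonempty := by
    rw [sdiff_nonempty]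
    exact fun h => hne (eq_of_subset_of_card_le h hcard.le).symm
  have hst : (s \ t).Nonempty := by
    rw [← card_pos, card_sdiff_comm hcard]
    exact hts.card_pos
  obtain ⟨b₀, hb₀, hmin⟩ := (t \ s).exists_min_image f hts
  calc ∑ a ∈ s, f a = ∑ a ∈ s ∩ t, f a + ∑ a ∈ s \ t, f a := (sum_inter_add_sum_sdiff s t f).symm
    _ < ∑ a ∈ s ∩ t, f a + #(s \ t) • f b₀ := by
      gcongr
      refine (sum_lt_sum_of_nonempty hst fun a ha => hlt a (mem_sdiff.1 ha).1 b₀ hb₀).trans_eq ?_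
      rw [sum_const]
    _ ≤ ∑ b ∈ t ∩ s, f b + ∑ b ∈ t \ s, f b := by
      rw [inter_comm, card_sdiff_comm hcard]
      gcongr
      exact card_nsmul_le_sum _ _ _ hmin
    _ = ∑ b ∈ t, f b := sum_inter_add_sum_sdiff t s f

theorem exists_sum_lt_sum_erase {M : Type*} [AddCommMonoid M] [LinearOrder M]
    [IsOrderedCancelAddMonoid M] {s t u : Finset α} {c : α} {f : α → M}
    (ht : t.Nonempty) (hlt : ∀ a ∈ t, ∀ b ∈ s.erase c \ t, f a < f b)
    (hus : u ⊆ s) (hcard : #u = #t + 1) (hne : u ≠ insert c t) :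
    ∃ y ∈ u, ∑ a ∈ t, f a < ∑ b ∈ u.erase y, f b := by
  have hsum : ∀ y ∈ u, (c ∈ u → y = c) → u.erase y ≠ t →
      ∑ a ∈ t, f a < ∑ b ∈ u.erase y, f b := by
    intro y hy hyc hyt
    refine sum_lt_sum_of_card_eq_of_forall_lt (by rw [card_erase_of_mem hy, hcard]; rfl)
      hyt.symm fun a ha b hb => hlt a ha b ?_
    rw [mem_sdiff, mem_erase] at hb ⊢
    refine ⟨⟨fun hbc => hb.1.1 ?_, hus hb.1.2⟩, hb.2⟩
    rw [hbc, hyc (hbc ▸ hb.1.2)]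
  by_cases hc : c ∈ u
  · refine ⟨c, hc, hsum c hc (fun _ => rfl) fun h => hne ?_⟩
    rw [← h, insert_erase hc]
  · obtain ⟨y, hy, hmin⟩ := u.exists_min_image f (card_pos.1 (by omega))
    refine ⟨y, hy, hsum y hy (absurd · hc) fun h => ?_⟩
    obtain ⟨a, ha⟩ := ht
    have hyt : y ∉ t := h ▸ notMem_erase y u
    have hyc : y ≠ c := fun hyc => hc (hyc ▸ hy)
    exact (hmin a (mem_of_mem_erase (h.symm ▸ ha))).not_gt
      (hlt a ha y (mem_sdiff.2 ⟨mem_erase.2 ⟨hyc, hus hy⟩, hyt⟩))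

end Finset

namespace PhyloTree

open Finset Relation

variable {V : Type} [Fintype V] [DecidableEq V] {T : PhyloTree V}

theorem ne_root_of_step {a b : V} (h : T.step a b) : a ≠ T.root := by
  rintro rfl
  simp [step, T.parent_root] at h

theorem hgt_lt_hgt_of_step {a b : V} (h : T.step a b) : T.hgt b < T.hgt a := by
  linarith [T.hgt_eq a b h, T.len_pos a (ne_root_of_step h)]

theorem step_rightUnique : Relator.RightUnique T.step := fun _ _ _ h₁ h₂ =>
  Option.some.inj (h₁.symm.trans h₂)

theorem exists_step_of_ne_root {a : V} (h : a ≠ T.root) : ∃ b, T.step a b :=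
  Option.isSome_iff_exists.1 (T.parent_isSome a h)

theorem not_isLeaf_of_step {a b : V} (h : T.step a b) : ¬ T.IsLeaf b := fun hb => hb a h

theorem anc_root (v : V) : T.anc T.root v := T.reaches_root v

theorem anc.trans {u v w : V} (huv : T.anc u v) (hvw : T.anc v w) : T.anc u w :=
  ReflTransGen.trans hvw huv

theorem anc_of_step {a b : V} (h : T.step a b) : T.anc b a := ReflTransGen.single h

theorem anc.eq_or_anc_of_step {v a b : V} (hv : T.anc v a) (h : T.step a b) :
    v = a ∨ T.anc v b := by
  rcases ReflTransGen.cases_head hv with rfl | ⟨c, hac, hcv⟩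
  · exact Or.inl rfl
  · exact Or.inr (step_rightUnique h hac ▸ hcv)

theorem anc.hgt_le {u v : V} (h : T.anc u v) : T.hgt u ≤ T.hgt v := by
  induction h with
  | refl => exact le_rfl
  | tail _ hstep ih => exact (hgt_lt_hgt_of_step hstep).le.trans ih

theorem anc.hgt_lt {u v : V} (h : T.anc u v) (hne : u ≠ v) : T.hgt u < T.hgt v := by
  rcases ReflTransGen.cases_tail h with rfl | ⟨c, hvc, hcu⟩
  · exact absurd rfl hne
  · exact (hgt_lt_hgt_of_step hcu).trans_le (show T.anc c v from hvc).hgt_le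

theorem anc_total {u v w : V} (hu : T.anc u w) (hv : T.anc v w) : T.anc u v ∨ T.anc v u :=
  ReflTransGen.total_of_right_unique step_rightUnique hv hu

theorem IsLeaf.eq_of_anc {x v : V} (hx : T.IsLeaf x) (h : T.anc x v) : x = v := by
  rcases ReflTransGen.cases_tail h with rfl | ⟨c, _, hcx⟩
  · rfl
  · exact absurd hcx (hx c)

theorem anc.eq_of_hgt_le {u v : V} (h : T.anc u v) (hle : T.hgt v ≤ T.hgt u) : u = v :=
  by_contra fun hne => (h.hgt_lt hne).not_ge hle

theorem IsLeaf.ne_root {x a b : V} (hx : T.IsLeaf x) (h : T.step a b) : x ≠ T.root := by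
  rintro rfl
  exact ne_root_of_step h (hx.eq_of_anc (anc_root a)).symm

variable (T) in
/-- The edge into a non-root vertex `v` is indexed by `v`, so these are the edges on the path from
the root to `u`. -/
def pathEdges (u : V) : Finset V := univ.filter fun v => v ≠ T.root ∧ T.anc v u

theorem pathEdges_root : T.pathEdges T.root = ∅ := by
  refine filter_false_of_mem fun v _ ⟨hv, hanc⟩ => hv ?_
  rcases ReflTransGen.cases_head hanc with h | ⟨c, hc, _⟩
  · exact h.symm
  · simp [step, T.parent_root] at hc

theorem pathEdges_of_step {a b : V} (h : T.step a b) :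
    T.pathEdges a = insert a (T.pathEdges b) := by
  ext v
  simp only [pathEdges, mem_insert, mem_filter, mem_univ, true_and]
  constructor
  · rintro ⟨hv, hanc⟩
    exact (hanc.eq_or_anc_of_step h).imp_right (⟨hv, ·⟩)
  · rintro (rfl | ⟨hv, hanc⟩)
    · exact ⟨ne_root_of_step h, ReflTransGen.refl⟩
    · exact ⟨hv, hanc.trans (anc_of_step h)⟩

theorem sum_len_pathEdges (u : V) : ∑ v ∈ T.pathEdges u, T.len v = T.hgt u := by
  induction T.reaches_root u using ReflTransGen.head_induction_on with
  | refl => rw [pathEdges_root, sum_empty, T.hgt_root]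
  | @head a b hab _ ih =>
    have ha : a ∉ T.pathEdges b := fun ha =>
      (hgt_lt_hgt_of_step hab).not_ge (mem_filter.1 ha).2.2.hgt_le
    rw [pathEdges_of_step hab, sum_insert ha, ih, T.hgt_eq a b hab, add_comm]

variable (T) in
def spanEdges (Y : Set V) : Finset V :=
  univ.filter fun v => v ≠ T.root ∧ ∃ x ∈ Y, T.IsLeaf x ∧ T.anc v x

theorem PD_eq_sum_spanEdges (Y : Set V) : T.PD Y = ∑ v ∈ T.spanEdges Y, T.len v :=
  (sum_filter _ _).symm

theorem ne_root_of_mem_spanEdges {Y : Set V} {v : V} (hv : v ∈ T.spanEdges Y) : v ≠ T.root :=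
  (mem_filter.1 hv).2.1

theorem disjoint_pathEdges_erase {Y : Finset V} (hY : ↑Y ⊆ T.leaves) (y₀ : V) :
    Disjoint (T.pathEdges y₀) (Y.erase y₀) :=
  disjoint_left.2 fun _ hv hvY =>
    ne_of_mem_erase hvY ((hY (mem_of_mem_erase hvY) : T.IsLeaf _).eq_of_anc (mem_filter.1 hv).2.2)

theorem pathEdges_union_erase_subset_spanEdges {Y : Finset V} (hY : ↑Y ⊆ T.leaves) {y₀ : V}
    (hy₀ : y₀ ∈ Y) : T.pathEdges y₀ ∪ Y.erase y₀ ⊆ T.spanEdges ↑Y := by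
  intro v hv
  simp only [spanEdges, pathEdges, mem_union, mem_filter, mem_univ, true_and, mem_erase] at hv ⊢
  rcases hv with ⟨hv, hanc⟩ | ⟨hvy, hvY⟩
  · exact ⟨hv, y₀, hy₀, hY hy₀, hanc⟩
  · refine ⟨?_, v, hvY, hY hvY, ReflTransGen.refl⟩
    rintro rfl
    exact hvy ((hY hvY : T.IsLeaf T.root).eq_of_anc (anc_root y₀))

theorem hgt_add_sum_erase_le_PD {Y : Finset V} (hY : ↑Y ⊆ T.leaves) {y₀ : V} (hy₀ : y₀ ∈ Y) :
    T.hgt y₀ + ∑ y ∈ Y.erase y₀, T.len y ≤ T.PD ↑Y := by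
  rw [← sum_len_pathEdges, ← sum_union (disjoint_pathEdges_erase hY y₀), PD_eq_sum_spanEdges]
  exact sum_le_sum_of_subset_of_nonneg (pathEdges_union_erase_subset_spanEdges hY hy₀)
    fun v hv _ => (T.len_pos v (ne_root_of_mem_spanEdges hv)).le

theorem PD_eq_hgt_add_sum_erase {Y : Finset V} (hY : ↑Y ⊆ T.leaves) {y₀ : V} (hy₀ : y₀ ∈ Y)
    (hanc : ∀ y ∈ Y, ∀ v, T.anc v y → v = y ∨ T.anc v y₀) :
    T.PD ↑Y = T.hgt y₀ + ∑ y ∈ Y.erase y₀, T.len y := by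
  rw [← sum_len_pathEdges, ← sum_union (disjoint_pathEdges_erase hY y₀), PD_eq_sum_spanEdges]
  rw [Subset.antisymm (fun v hv => ?_) (pathEdges_union_erase_subset_spanEdges hY hy₀)]
  simp only [spanEdges, pathEdges, mem_union, mem_filter, mem_univ, true_and, mem_erase] at hv ⊢
  obtain ⟨hv, x, hx, -, hvx⟩ := hv
  rcases hanc x hx v hvx with rfl | hvy₀
  · by_cases hvy : v = y₀
    · exact Or.inl ⟨hv, hvy ▸ ReflTransGen.refl⟩
    · exact Or.inr ⟨hvy, hx⟩
  · exact Or.inl ⟨hv, hvy₀⟩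

theorem PD_singleton {x : V} (hx : T.IsLeaf x) : T.PD {x} = T.hgt x := by
  have h := PD_eq_hgt_add_sum_erase (Y := {x}) (by rwa [coe_singleton, Set.singleton_subset_iff])
    (mem_singleton_self x) fun y hy _ hv => Or.inr (mem_singleton.1 hy ▸ hv)
  rwa [coe_singleton, erase_singleton, sum_empty, add_zero] at h

theorem isMinPD_one_iff (hU : T.Ultrametric) {A : Set V} :
    T.IsMinPD 1 A ↔ ∃ x ∈ T.leaves, A = {x} := by
  constructor
  · rintro ⟨hA, hcard, -⟩
    obtain ⟨x, rfl⟩ := Set.ncard_eq_one.1 hcard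
    exact ⟨x, hA rfl, rfl⟩
  · rintro ⟨x, hx, rfl⟩
    refine ⟨Set.singleton_subset_iff.2 hx, Set.ncard_singleton x, fun Y hY hcard => ?_⟩
    obtain ⟨y, rfl⟩ := Set.ncard_eq_one.1 hcard
    have hy : T.IsLeaf y := hY rfl
    rw [PD_singleton hx, PD_singleton hy, hU x y hx hy]

theorem isMinPD_iff_eq_of_PD_lt {k : ℕ} {A : Finset V} (hA : ↑A ⊆ T.leaves) (hcard : #A = k)
    (hlt : ∀ Y : Finset V, ↑Y ⊆ T.leaves → #Y = k → Y ≠ A → T.PD ↑A < T.PD ↑Y) (B : Set V) :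
    T.IsMinPD k B ↔ B = ↑A := by
  constructor
  · rintro ⟨hB, hBcard, hBmin⟩
    rw [← Set.coe_toFinset B] at hB hBcard hBmin ⊢
    rw [Set.ncard_coe_finset] at hBcard
    by_contra hne
    exact (hlt _ hB hBcard (mt (congrArg _) hne)).not_ge
      (hBmin _ hA (by rwa [Set.ncard_coe_finset]))
  · rintro rfl
    refine ⟨hA, by rwa [Set.ncard_coe_finset], fun Y hY hYcard => ?_⟩
    rw [← Set.coe_toFinset Y] at hY hYcard ⊢
    rw [Set.ncard_coe_finset] at hYcard
    by_cases hYA : Y.toFinset = A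
    · rw [hYA]
    · exact (hlt _ hY hYcard hYA).le

theorem exists_cherry_below (hB : T.Binary) {v : V} (hv : ¬ T.IsLeaf v) :
    ∃ x y w, x ≠ y ∧ T.IsLeaf x ∧ T.IsLeaf y ∧ T.step x w ∧ T.step y w ∧ T.anc v w := by
  obtain ⟨w, hw, hmax⟩ := (univ.filter fun w => ¬ T.IsLeaf w ∧ T.anc v w).exists_max_image
    T.hgt ⟨v, mem_filter.2 ⟨mem_univ v, hv, ReflTransGen.refl⟩⟩
  obtain ⟨-, hwl, hvw⟩ := mem_filter.1 hw
  have hleaf : ∀ z, T.step z w → T.IsLeaf z := fun z hz => by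
    by_contra hzl
    exact (hgt_lt_hgt_of_step hz).not_ge
      (hmax z (mem_filter.2 ⟨mem_univ z, hzl, hvw.trans (anc_of_step hz)⟩))
  obtain ⟨x, y, hxy, hchildren⟩ := Set.ncard_eq_two.1 (hB w hwl)
  have hx : T.step x w := (hchildren ▸ Set.mem_insert x {y} : x ∈ {u | T.parent u = some w})
  have hy : T.step y w := (hchildren ▸ Set.mem_insert_of_mem x rfl : y ∈ {u | T.parent u = some w})
  exact ⟨x, y, w, hxy, hleaf x hx, hleaf y hy, hx, hy, hvw⟩

section Caterpillar

variable {c₁ c₂ m : V}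

theorem anc_of_not_isLeaf (hB : T.Binary) (huniq : ∀ p, T.IsCherry p → p = {c₁, c₂})
    (h₁ : T.step c₁ m) (h₂ : T.step c₂ m) {u : V} (hu : ¬ T.IsLeaf u) : T.anc u m := by
  obtain ⟨x, y, w, hxy, hx, hy, hxw, hyw, huw⟩ := exists_cherry_below hB hu
  have hx' : x ∈ ({c₁, c₂} : Set V) :=
    huniq _ ⟨x, y, w, hxy, rfl, hx, hy, hxw, hyw⟩ ▸ Set.mem_insert x {y}
  obtain rfl : w = m := by
    rcases hx' with rfl | rfl
    exacts [step_rightUnique hxw h₁, step_rightUnique hxw h₂]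
  exact huw

theorem eq_or_anc_of_anc (hspine : ∀ u, ¬ T.IsLeaf u → T.anc u m) (hcm : T.step c₂ m) {v y : V}
    (hv : T.anc v y) : v = y ∨ T.anc v c₂ := by
  rcases ReflTransGen.cases_head hv with rfl | ⟨u, hyu, huv⟩
  · exact Or.inl rfl
  · exact Or.inr ((show T.anc v u from huv).trans
      ((hspine u (not_isLeaf_of_step hyu)).trans (anc_of_step hcm)))

theorem len_le_len_of_isLeaf (hU : T.Ultrametric) (hspine : ∀ u, ¬ T.IsLeaf u → T.anc u m)
    (hc : T.IsLeaf c₂) (hcm : T.step c₂ m) {y : V} (hy : T.IsLeaf y) : T.len c₂ ≤ T.len y := by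
  obtain ⟨u, hyu⟩ := exists_step_of_ne_root (hy.ne_root hcm)
  linarith [T.hgt_eq y u hyu, T.hgt_eq c₂ m hcm, hU y c₂ hy hc,
    (hspine u (not_isLeaf_of_step hyu)).hgt_le]

theorem injOn_len (hU : T.Ultrametric) (hspine : ∀ u, ¬ T.IsLeaf u → T.anc u m)
    (huniq : ∀ p, T.IsCherry p → p = {c₁, c₂}) (hcm : T.step c₂ m) :
    Set.InjOn T.len (T.leaves \ {c₂}) := by
  rintro y ⟨hy, hyc : y ≠ c₂⟩ z ⟨hz, hzc : z ≠ c₂⟩ hlen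
  obtain ⟨u, hyu⟩ := exists_step_of_ne_root ((hy : T.IsLeaf y).ne_root hcm)
  obtain ⟨w, hzw⟩ := exists_step_of_ne_root ((hz : T.IsLeaf z).ne_root hcm)
  have hhgt : T.hgt u = T.hgt w := by
    linarith [T.hgt_eq y u hyu, T.hgt_eq z w hzw, hU y z hy hz]
  obtain rfl : u = w := by
    rcases anc_total (hspine u (not_isLeaf_of_step hyu)) (hspine w (not_isLeaf_of_step hzw))
      with h | h
    exacts [h.eq_of_hgt_le hhgt.ge, (h.eq_of_hgt_le hhgt.le).symm]
  by_contra hyz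
  have hc₂ : c₂ ∈ ({y, z} : Set V) := huniq _ ⟨y, z, u, hyz, rfl, hy, hz, hyu, hzw⟩ ▸ Or.inr rfl
  rcases hc₂ with h | h
  exacts [hyc h.symm, hzc h.symm]

end Caterpillar

theorem IsCaterpillar.exists_PD_lt (hU : T.Ultrametric) (hCat : T.IsCaterpillar) {k : ℕ}
    (hk : 2 ≤ k) (hkn : k ≤ T.leaves.ncard) :
    ∃ A : Finset V, ↑A ⊆ T.leaves ∧ #A = k ∧
      (∀ Y : Finset V, ↑Y ⊆ T.leaves → #Y = k → Y ≠ A → T.PD ↑A < T.PD ↑Y) ∧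
      ∀ x ∈ A, ∀ y ∈ T.leaves, y ∉ A → T.len x ≤ T.len y := by
  obtain ⟨hB, _, ⟨c₁, c₂, m, -, rfl, -, hc, h₁, hcm⟩, huniq⟩ := hCat
  have hspine : ∀ u, ¬ T.IsLeaf u → T.anc u m := fun _ => anc_of_not_isLeaf hB huniq h₁ hcm
  have hcL : c₂ ∈ T.leaves.toFinset := Set.mem_toFinset.2 hc
  obtain ⟨B, hBL, hBcard, hBlt⟩ := (T.leaves.toFinset.erase c₂).exists_subset_card_eq_forall_lt
    (k := k - 1) (by rw [coe_erase, Set.coe_toFinset]; exact injOn_len hU hspine huniq hcm)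
    (by rw [card_erase_of_mem hcL, ← Set.ncard_eq_toFinset_card']; omega)
  have hcB : c₂ ∉ B := fun h => (mem_erase.1 (hBL h)).1 rfl
  have hAL : ↑(insert c₂ B) ⊆ T.leaves := by
    rw [coe_insert]
    exact Set.insert_subset hc fun x hx => Set.mem_toFinset.1 (mem_of_mem_erase (hBL hx))
  refine ⟨insert c₂ B, hAL, by rw [card_insert_of_notMem hcB]; omega,
    fun Y hY hYcard hne => ?_, fun x hx y hy hyA => ?_⟩
  · obtain ⟨y, hy, hlt⟩ := exists_sum_lt_sum_erase (card_pos.1 (by omega)) hBlt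
      (fun x hx => Set.mem_toFinset.2 (hY hx)) (by omega) hne
    calc T.PD ↑(insert c₂ B) = T.hgt c₂ + ∑ b ∈ B, T.len b := by
          rw [PD_eq_hgt_add_sum_erase hAL (mem_insert_self c₂ B)
            fun _ _ _ hv => eq_or_anc_of_anc hspine hcm hv, erase_insert hcB]
      _ < T.hgt y + ∑ z ∈ Y.erase y, T.len z := by rw [hU y c₂ (hY hy) hc]; gcongr
      _ ≤ T.PD ↑Y := hgt_add_sum_erase_le_PD hY hy
  · rcases mem_insert.1 hx with rfl | hxB
    · exact len_le_len_of_isLeaf hU hspine hc hcm hy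
    · refine (hBlt x hxB y (mem_sdiff.2 ⟨mem_erase.2 ⟨?_, Set.mem_toFinset.2 hy⟩, ?_⟩)).le
      exacts [fun h => hyA (h ▸ mem_insert_self c₂ B), fun h => hyA (mem_insert_of_mem h)]

end PhyloTree

open PhyloTree

/-- concluding remarks of the paper.  For an ultrametric
rooted caterpillar tree on `n` leaves:  for every `2 ≤ k ≤ n` there is exactly
one size-`k` minPD set, namely the set of `k` leaves whose pendant edges are
shortest; and for `k = 1` there are exactly `n` size-1 minPD sets (every
singleton of a leaf is a minPD set). -/
theorem caterpillar_minPD_sets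
    {V : Type} [Fintype V] [DecidableEq V] (T : PhyloTree V)
    (hU : T.Ultrametric) (hCat : T.IsCaterpillar) (n : ℕ)
    (hn : n = T.leaves.ncard) :
    (∀ k, 2 ≤ k → k ≤ n →
      (∃! A : Set V, T.IsMinPD k A) ∧
      ∀ A, T.IsMinPD k A → ∀ x ∈ A, ∀ y ∈ T.leaves, y ∉ A → T.len x ≤ T.len y) ∧
    ({A : Set V | T.IsMinPD 1 A}.ncard = n ∧ ∀ x ∈ T.leaves, T.IsMinPD 1 {x}) := by
  refine ⟨fun k hk hkn => ?_, ?_, fun x hx => (isMinPD_one_iff hU).2 ⟨x, hx, rfl⟩⟩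
  · obtain ⟨A, hAL, hAcard, hlt, hsep⟩ := hCat.exists_PD_lt hU hk (hn ▸ hkn)
    have hmin := isMinPD_iff_eq_of_PD_lt hAL hAcard hlt
    refine ⟨⟨↑A, (hmin _).2 rfl, fun B hB => (hmin B).1 hB⟩, fun B hB => ?_⟩
    exact (hmin B).1 hB ▸ hsep
  · have hsingletons : {A : Set V | T.IsMinPD 1 A} = (fun x => {x}) '' T.leaves :=
      Set.ext fun A => (isMinPD_one_iff hU).trans (by simp [eq_comm])
    rw [hsingletons, Set.ncard_image_of_injective _ Set.singleton_injective, hn]
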